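/- Let Π_p (p ≥ 2) be Borel probability measures on ℝ^d × ℝ^d such that the support of Π_p is c_p²-cyclically monotone, where c_p(x,y) = |x−y|_p is the ℓ^p norm distance. If Π_p converges weakly to a probability measure Π_∞, then the support of Π_∞ is c_∞²-cyclically monotone, where c_∞(x,y) = |x−y|_∞. -/

import Mathlib

open MeasureTheory Filter

/-- `c²`-cyclical monotonicity of a set `S ⊆ E × E`. -/
def CyclicallyMonotone2 {E : Type*} (c : E → E → ℝ) (S : Set (E × E)) : Prop :=
  ∀ (N : ℕ) (pts : Fin (N + 1) → E × E), (∀ i, pts i ∈ S) →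
    ∑ i, (c (pts i).1 (pts i).2) ^ 2 ≤ ∑ i, (c (pts i).1 (pts (i + 1)).2) ^ 2

/-- The support of a Borel measure on a metric space. -/
def measSupport {X : Type*} [PseudoMetricSpace X] [MeasurableSpace X]
    (μ : Measure X) : Set X :=
  {x | ∀ ε > 0, 0 < μ (Metric.ball x ε)}

/-- The ℓ^p distance on `ℝ^d`. -/
noncomputable def lpCost (d : ℕ) (p : ℝ) (x y : Fin d → ℝ) : ℝ :=
  (∑ i, |x i - y i| ^ p) ^ (1 / p)

/-- The ℓ^∞ distance on `ℝ^d` (the sup norm of `Fin d → ℝ`). -/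
noncomputable def linftyCost (d : ℕ) (x y : Fin d → ℝ) : ℝ := ‖x - y‖

/-!
Cyclical monotonicity passes to the limit as soon as the costs converge continuously
(`c_k (x_k, y_k) → c (x, y)` whenever `k → ∞` and `(x_k, y_k) → (x, y)`) and every point of the
limit set is approached by points of the sets `S_k`: given finitely many points of the limit set,
approximate them by points of `S_k` for large `k`; the defining inequality holds there and is a
closed condition. Both hypotheses hold here. By the portmanteau theorem a ball around a point of
`supp Π_∞` has positive `Π_p`-mass for large `p`, so it meets `supp Π_p`; and
`|x - y|_∞ ≤ c_p (x, y) ≤ d ^ (1/p) |x - y|_∞` with `d ^ (1/p) → 1`.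
-/

open Topology

namespace CyclicallyMonotone2

variable {ι E : Type*} [PseudoMetricSpace E] {l : Filter ι} {c : ι → E → E → ℝ}
  {c' : E → E → ℝ}

theorem tendsto_cost_apply
    (hc : ∀ x y, Tendsto (fun t : ι × E × E => c t.1 t.2.1 t.2.2) (l ×ˢ 𝓝 (x, y)) (𝓝 (c' x y)))
    {n : ℕ} (pts : Fin n → E × E) (i j : Fin n) :
    Tendsto (fun t : ι × (Fin n → E × E) => c t.1 (t.2 i).1 (t.2 j).2) (l ×ˢ 𝓝 pts)
      (𝓝 (c' (pts i).1 (pts j).2)) := by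
  have hpair : Tendsto (fun q : Fin n → E × E => ((q i).1, (q j).2)) (𝓝 pts)
      (𝓝 ((pts i).1, (pts j).2)) :=
    (((continuous_apply i).fst).prodMk (continuous_apply j).snd).tendsto pts
  exact (hc _ _).comp (tendsto_fst.prodMk (hpair.comp tendsto_snd))

theorem of_tendsto [l.NeBot] {S : ι → Set (E × E)} {T : Set (E × E)}
    (hmono : ∀ᶠ k in l, CyclicallyMonotone2 (c k) (S k))
    (hT : ∀ x ∈ T, ∀ ε > 0, ∀ᶠ k in l, ∃ z ∈ S k, dist z x < ε)
    (hc : ∀ x y, Tendsto (fun t : ι × E × E => c t.1 t.2.1 t.2.2) (l ×ˢ 𝓝 (x, y)) (𝓝 (c' x y))) :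
    CyclicallyMonotone2 c' T := by
  intro N pts hpts
  have hcosts : Tendsto (fun t : ι × (Fin (N + 1) → E × E) =>
      (∑ i, c t.1 (t.2 i).1 (t.2 i).2 ^ 2, ∑ i, c t.1 (t.2 i).1 (t.2 (i + 1)).2 ^ 2))
      (l ×ˢ 𝓝 pts)
      (𝓝 (∑ i, c' (pts i).1 (pts i).2 ^ 2, ∑ i, c' (pts i).1 (pts (i + 1)).2 ^ 2)) :=
    (tendsto_finsetSum _ fun i _ => (tendsto_cost_apply hc pts i i).pow 2).prodMk_nhds
      (tendsto_finsetSum _ fun i _ => (tendsto_cost_apply hc pts i (i + 1)).pow 2)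
  refine (isClosed_le continuous_fst continuous_snd).mem_of_frequently_of_tendsto ?_ hcosts
  rw [(l.basis_sets.prod Metric.nhds_basis_ball).frequently_iff]
  rintro ⟨A, ε⟩ ⟨hA, hε⟩
  have hnear : ∀ᶠ k in l, ∀ i, ∃ z ∈ S k, dist z (pts i) < ε :=
    eventually_all.2 fun i => hT _ (hpts i) ε hε
  obtain ⟨k, hkA, hkmono, hk⟩ := (Filter.Eventually.and hA (hmono.and hnear)).exists
  choose z hzS hzdist using hk
  exact ⟨(k, z), ⟨hkA, (dist_pi_lt_iff hε).2 hzdist⟩, hkmono N z hzS⟩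

end CyclicallyMonotone2

section Support

variable {X : Type*} [PseudoMetricSpace X] [MeasurableSpace X]

theorem exists_mem_measSupport_dist_lt [SecondCountableTopology X] {μ : Measure X} {x : X}
    {δ : ℝ} (h : μ (Metric.ball x δ) ≠ 0) : ∃ z ∈ measSupport μ, dist z x < δ := by
  obtain ⟨z, hzB, hz⟩ := exists_mem_forall_mem_nhdsWithin_pos_measure h
  refine ⟨z, fun ε hε => ?_, Metric.mem_ball.mp hzB⟩
  have hmem : Metric.ball z ε ∩ Metric.ball x δ ∈ 𝓝[Metric.ball x δ] z :=
    inter_mem (mem_nhdsWithin_of_mem_nhds (Metric.ball_mem_nhds z hε)) self_mem_nhdsWithin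
  exact (hz _ hmem).trans_le (measure_mono Set.inter_subset_left)

theorem eventually_exists_mem_measSupport_dist_lt [SecondCountableTopology X]
    [OpensMeasurableSpace X] {ι : Type*} {l : Filter ι} {μ : ι → ProbabilityMeasure X}
    {ν : ProbabilityMeasure X} (h : Tendsto μ l (𝓝 ν)) {x : X}
    (hx : x ∈ measSupport (ν : Measure X)) {ε : ℝ} (hε : 0 < ε) : ∀ᶠ k in l, ∃ z ∈ measSupport (μ k : Measure X), dist z x < ε := by
  have hliminf := (hx ε hε).trans_le
    (ProbabilityMeasure.le_liminf_measure_open_of_tendsto h Metric.isOpen_ball)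
  filter_upwards [eventually_lt_of_lt_liminf hliminf] with k hk
  exact exists_mem_measSupport_dist_lt hk.ne'

end Support

section LpCost

variable (d : ℕ)

theorem lpCost_nonneg (p : ℝ) (x y : Fin d → ℝ) : 0 ≤ lpCost d p x y := by
  unfold lpCost
  positivity

variable {p : ℝ}

theorem norm_sub_le_lpCost (hp : 0 < p) (x y : Fin d → ℝ) : ‖x - y‖ ≤ lpCost d p x y := by
  refine (pi_norm_le_iff_of_nonneg (lpCost_nonneg d p x y)).2 fun i => ?_
  have hterm : |x i - y i| ^ p ≤ ∑ j, |x j - y j| ^ p :=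
    Finset.single_le_sum (f := fun j => |x j - y j| ^ p) (fun j _ => by positivity)
      (Finset.mem_univ i)
  calc ‖(x - y) i‖ = (|x i - y i| ^ p) ^ (1 / p) := by
        rw [one_div, Real.rpow_rpow_inv (abs_nonneg _) hp.ne', Pi.sub_apply, Real.norm_eq_abs]
    _ ≤ lpCost d p x y := Real.rpow_le_rpow (by positivity) hterm (by positivity)

-- `max d 1` rather than `d`: for `d = 0` the factor `0 ^ (1 / p) = 0` would not tend to `1`.
theorem lpCost_le_mul_norm_sub (hp : 0 < p) (x y : Fin d → ℝ) :
    lpCost d p x y ≤ max (d : ℝ) 1 ^ (1 / p) * ‖x - y‖ := by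
  have hsum : ∑ i, |x i - y i| ^ p ≤ max (d : ℝ) 1 * ‖x - y‖ ^ p :=
    calc ∑ i, |x i - y i| ^ p ≤ ∑ _i : Fin d, ‖x - y‖ ^ p :=
          Finset.sum_le_sum fun i _ => Real.rpow_le_rpow (abs_nonneg _)
            (by simpa only [Pi.sub_apply, Real.norm_eq_abs] using norm_le_pi_norm (x - y) i) hp.le
      _ = d * ‖x - y‖ ^ p := by simp
      _ ≤ max (d : ℝ) 1 * ‖x - y‖ ^ p := by gcongr; exact le_max_left _ _
  calc lpCost d p x y ≤ (max (d : ℝ) 1 * ‖x - y‖ ^ p) ^ (1 / p) :=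
        Real.rpow_le_rpow (by positivity) hsum (by positivity)
    _ = max (d : ℝ) 1 ^ (1 / p) * ‖x - y‖ := by
        rw [Real.mul_rpow (by positivity) (by positivity), one_div,
          Real.rpow_rpow_inv (norm_nonneg _) hp.ne']

theorem tendsto_lpCost (x y : Fin d → ℝ) :
    Tendsto (fun t : ℝ × (Fin d → ℝ) × (Fin d → ℝ) => lpCost d t.1 t.2.1 t.2.2)
      (atTop ×ˢ 𝓝 (x, y)) (𝓝 (linftyCost d x y)) := by
  have hnorm : Tendsto (fun t : ℝ × (Fin d → ℝ) × (Fin d → ℝ) => ‖t.2.1 - t.2.2‖)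
      (atTop ×ˢ 𝓝 (x, y)) (𝓝 (linftyCost d x y)) :=
    ((continuous_fst.sub continuous_snd).norm.tendsto (x, y)).comp tendsto_snd
  have hconst : Tendsto (fun p : ℝ => max (d : ℝ) 1 ^ (1 / p)) atTop (𝓝 1) := by
    have hbase : max (d : ℝ) 1 ≠ 0 := (zero_lt_one.trans_le (le_max_right _ _)).ne'
    simpa [Function.comp_def, one_div] using
      (Real.continuousAt_const_rpow hbase).tendsto.comp tendsto_inv_atTop_zero
  have hpos : ∀ᶠ t : ℝ × (Fin d → ℝ) × (Fin d → ℝ) in atTop ×ˢ 𝓝 (x, y), 0 < t.1 :=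
    tendsto_fst.eventually (eventually_gt_atTop 0)
  refine tendsto_of_tendsto_of_tendsto_of_le_of_le' hnorm
    (by simpa only [one_mul] using (hconst.comp tendsto_fst).mul hnorm) ?_ ?_
  · filter_upwards [hpos] with t ht using norm_sub_le_lpCost d ht _ _
  · filter_upwards [hpos] with t ht using lpCost_le_mul_norm_sub d ht _ _

end LpCost

/-- If each `Π_p` has `c_p²`-cyclically monotone support and `Π_p → Π_∞` weakly
as `p → ∞`, then the support of `Π_∞` is `c_∞²`-cyclically monotone. -/
theorem support_limit_cyclically_monotone (d : ℕ)
    (Pp : ℝ → ProbabilityMeasure ((Fin d → ℝ) × (Fin d → ℝ)))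
    (Plim : ProbabilityMeasure ((Fin d → ℝ) × (Fin d → ℝ)))
    (hmono : ∀ p ≥ (2:ℝ), CyclicallyMonotone2 (lpCost d p)
      (measSupport ((Pp p) : Measure ((Fin d → ℝ) × (Fin d → ℝ)))))
    (hconv : Tendsto Pp atTop (nhds Plim)) :
    CyclicallyMonotone2 (linftyCost d)
      (measSupport (Plim : Measure ((Fin d → ℝ) × (Fin d → ℝ)))) :=
  CyclicallyMonotone2.of_tendsto ((eventually_ge_atTop 2).mono hmono)
    (fun _ hx _ hε => eventually_exists_mem_measSupport_dist_lt hconv hx hε) (tendsto_lpCost d)
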